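/- Let t be an integer with t ≥ 7 and set P = t − 4. Then for every natural number n ≥ 1, the strict inequality 2·∑_{k=0}^{n} U_k(P,1) − U_n(P,1) < √((t−2)/(t−6)) · U_n(P,1) holds in ℝ. (This is the isoperimetric inequality A_n^t < √((t−2)/(t−6))·|S_n^t| for spheres in t-uniform simplicial complexes, via |S_n^t| = t·U_n(t−4,1) and A_n^t = 2∑_{k=0}^n |S_k^t| − |S_n^t|.) -/
import Mathlib


/-- Lucas sequence of the first kind: `U 0 = 0`, `U 1 = 1`,
`U (n+2) = P * U (n+1) - Q * U n`. -/
def lucasU (P Q : ℤ) : ℕ → ℤ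
  | 0 => 0
  | 1 => 1
  | (n + 2) => P * lucasU P Q (n + 1) - Q * lucasU P Q n

private lemma lucasU_rec (P : ℤ) (n : ℕ) :
    lucasU P 1 (n + 2) = P * lucasU P 1 (n + 1) - lucasU P 1 n := by
  rw [lucasU]; ring

private lemma lucasU_mono (P : ℤ) (hP : 3 ≤ P) :
    ∀ n, 0 ≤ lucasU P 1 n ∧ lucasU P 1 n + 1 ≤ lucasU P 1 (n + 1)
  | 0 => by simp [lucasU]
  | (n + 1) => by
    obtain ⟨h0, h1⟩ := lucasU_mono P hP n
    rw [lucasU_rec]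
    constructor <;> nlinarith

private lemma lucasU_id (P : ℤ) :
    ∀ n, (lucasU P 1 (n + 1)) ^ 2 - P * lucasU P 1 (n + 1) * lucasU P 1 n
        + (lucasU P 1 n) ^ 2 = 1
  | 0 => by simp [lucasU]
  | (n + 1) => by
    have ih := lucasU_id P n
    rw [lucasU_rec]
    linear_combination ih

private lemma lucasV_ge (P : ℤ) (hP : 3 ≤ P) :
    ∀ n, 2 ≤ 2 * lucasU P 1 (n + 1) - P * lucasU P 1 n
  | 0 => by simp [lucasU]
  | (n + 1) => by
    obtain ⟨h0, h1⟩ := lucasU_mono P hP n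
    have h0' := (lucasU_mono P hP (n + 1)).1
    rw [lucasU_rec]
    nlinarith

private lemma lucasU_sum (P : ℤ) :
    ∀ n, (P - 2) * ∑ k ∈ Finset.range (n + 1), lucasU P 1 k
      = lucasU P 1 (n + 1) - lucasU P 1 n - 1
  | 0 => by simp [lucasU]
  | (n + 1) => by
    have ih := lucasU_sum P n
    rw [Finset.sum_range_succ, mul_add, ih, lucasU_rec]
    ring

theorem isoperimetric_t_uniform (t : ℤ) (ht : 7 ≤ t) (P : ℤ) (hP : P = t - 4) :
    ∀ n : ℕ, 1 ≤ n →
      2 * ∑ k ∈ Finset.range (n + 1), (lucasU P 1 k : ℝ) - (lucasU P 1 n : ℝ) <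
        Real.sqrt (((t : ℝ) - 2) / ((t : ℝ) - 6)) * (lucasU P 1 n : ℝ) := by
  intro n hn
  have hP3 : 3 ≤ P := by omega
  have ht' : (7 : ℝ) ≤ (t : ℝ) := by exact_mod_cast ht
  have hPr : (P : ℝ) = (t : ℝ) - 4 := by exact_mod_cast congrArg (Int.cast : ℤ → ℝ) hP
  -- notation
  set u : ℝ := (lucasU P 1 n : ℝ) with hu
  set a : ℝ := (lucasU P 1 (n + 1) : ℝ) with ha
  set c : ℝ := Real.sqrt (((t : ℝ) - 2) / ((t : ℝ) - 6)) with hc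
  -- u ≥ 1
  have hu1 : (1 : ℝ) ≤ u := by
    obtain ⟨m, rfl⟩ : ∃ m, n = m + 1 := ⟨n - 1, by omega⟩
    obtain ⟨h0, h1⟩ := lucasU_mono P hP3 m
    have h : (1 : ℤ) ≤ lucasU P 1 (m + 1) := by linarith
    rw [hu]; exact_mod_cast h
  -- the quadratic identity
  have hid : a ^ 2 - (P : ℝ) * a * u + u ^ 2 = 1 := by
    rw [ha, hu]; exact_mod_cast lucasU_id P n
  -- V := 2a - P u
  set v : ℝ := 2 * a - (P : ℝ) * u with hv
  have hv2 : (2 : ℝ) ≤ v := by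
    have := lucasV_ge P hP3 n
    have : (2 : ℝ) ≤ (2 * lucasU P 1 (n + 1) - P * lucasU P 1 n : ℤ) := by exact_mod_cast this
    push_cast at this
    linarith [this]
  set d : ℝ := (P : ℝ) ^ 2 - 4 with hd
  have hvsq : v ^ 2 = d * u ^ 2 + 4 := by
    rw [hv, hd]; linear_combination 4 * hid
  have hd5 : (5 : ℝ) ≤ d := by rw [hd, hPr]; nlinarith
  have hvgt : (2 : ℝ) < v := by nlinarith
  -- squared inequality
  have hlt : (v - 2) ^ 2 < d * u ^ 2 := by nlinarith
  set s : ℝ := Real.sqrt d with hs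
  have hs0 : 0 ≤ s := Real.sqrt_nonneg _
  have hssq : s ^ 2 = d := Real.sq_sqrt (by linarith)
  have hsu : v - 2 < s * u := by
    have hb : 0 ≤ s * u := by positivity
    have h2 : (v - 2) ^ 2 < (s * u) ^ 2 := by rw [mul_pow, hssq]; exact hlt
    exact lt_of_pow_lt_pow_left₀ 2 hb h2
  -- relate c and s
  have h6 : (0 : ℝ) < (t : ℝ) - 6 := by linarith
  have hcs : c * ((t : ℝ) - 6) = s := by
    have hcsq : c ^ 2 = ((t : ℝ) - 2) / ((t : ℝ) - 6) :=
      Real.sq_sqrt (div_nonneg (by linarith) (by linarith))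
    have h1 : (c * ((t : ℝ) - 6)) ^ 2 = d := by
      rw [mul_pow, hcsq, hd, hPr]
      field_simp
      ring
    have h2 : 0 ≤ c * ((t : ℝ) - 6) := mul_nonneg (Real.sqrt_nonneg _) h6.le
    rw [hs, ← h1, Real.sqrt_sq h2]
  -- sum identity in ℝ
  have hsum : ((P : ℝ) - 2) * ∑ k ∈ Finset.range (n + 1), (lucasU P 1 k : ℝ)
      = a - u - 1 := by
    have := lucasU_sum P n
    have := congrArg (Int.cast : ℤ → ℝ) this
    push_cast at this
    rw [ha, hu]
    convert this using 2
  set S : ℝ := ∑ k ∈ Finset.range (n + 1), (lucasU P 1 k : ℝ) with hS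
  have key : ((t : ℝ) - 6) * (2 * S - u) < ((t : ℝ) - 6) * (c * u) := by
    have e1 : ((t : ℝ) - 6) * (2 * S - u) = v - 2 := by
      have hP6 : (P : ℝ) - 2 = (t : ℝ) - 6 := by rw [hPr]; ring
      rw [hv, ← hP6]
      linear_combination 2 * hsum
    have e2 : ((t : ℝ) - 6) * (c * u) = s * u := by rw [← hcs]; ring
    rw [e1, e2]
    exact hsu
  exact lt_of_mul_lt_mul_left key (le_of_lt h6)
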